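/- Let f be a homeomorphism of the torus T² homotopic to a Dehn twist, with lift f̂ to the vertical cylinder A. For a lift g of a Dehn twist homeomorphism, write B_S⁻(g) for the union of the unbounded connected components of {ẑ ∈ A : gⁿ(ẑ) ∈ H⁻ for all n ≥ 0}, and ω(B_S⁻(g)) = ∩_{n≥0} closure(∪_{i≥n} gⁱ(B_S⁻(g))). Then ω(B_S⁻(f̂)) = ω(B_S⁻(f̂⁻¹)); i.e., the ω-limit of B_S⁻ computed for f̂ equals the ω-limit of the corresponding set computed for the inverse map f̂⁻¹. -/

import Mathlib

/-!
`f̂` moves points a bounded vertical distance and maps `B⁻(f̂)` into itself, so it maps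
`B_S⁻(f̂)` into itself and `ω(B_S⁻(f̂)) = ⋂ₙ f̂ⁿ(closure B_S⁻(f̂))`, an `f̂`-invariant set.
A point `z` of this set lies in `f̂ⁿ(B⁻(f̂))` for every `n`, so its first `n` backward iterates
stay in `H⁻`; hence `z ∈ B⁻(f̂⁻¹)`. Moreover `z` is a limit of the unbounded connected sets
`f̂ⁿ(C)`, `C` an unbounded component of `B⁻(f̂)`, which lie in the closed sets decreasing to
`B⁻(f̂⁻¹)`; a compactness argument then shows that the component of `z` in `B⁻(f̂⁻¹)` is
unbounded. So `ω(B_S⁻(f̂)) ⊆ f̂⁻ⁿ(B_S⁻(f̂⁻¹))` for every `n`, and symmetry gives equality.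
-/

noncomputable section

open MeasureTheory

abbrev Torus := AddCircle (1 : ℝ) × AddCircle (1 : ℝ)
abbrev Cyl := AddCircle (1 : ℝ) × ℝ

/-- The covering map from the plane to the vertical cylinder. -/
def projCyl (z : ℝ × ℝ) : Cyl := ((z.1 : AddCircle (1 : ℝ)), z.2)

/-- The covering map from the plane to the torus. -/
def projTorus (z : ℝ × ℝ) : Torus := ((z.1 : AddCircle (1 : ℝ)), (z.2 : AddCircle (1 : ℝ)))

/-- A lift to the plane of a torus homeomorphism homotopic to a Dehn twist:
a homeomorphism of the plane commuting with integer horizontal translations and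
satisfying the Dehn-twist relation for vertical translations, with twist
coefficient `k > 0`. -/
structure DehnLift where
  F : (ℝ × ℝ) ≃ₜ (ℝ × ℝ)
  k : ℤ
  k_pos : 0 < k
  horiz : ∀ x y : ℝ, F (x + 1, y) = F (x, y) + (1, 0)
  vert : ∀ x y : ℝ, F (x, y + 1) = F (x, y) + ((k : ℝ), 1)

/-- The vertical rotation set of a cylinder map:
`ρ_V(f̂) = ∩_{i≥1} closure( ∪_{n≥i} { (p₂(f̂ⁿ(ẑ)) − p₂(ẑ))/n : ẑ ∈ A } )`. -/
def rotSet (fhat : Cyl → Cyl) : Set ℝ :=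
  ⋂ i : ℕ, closure (⋃ n : ℕ, ⋃ _ : i + 1 ≤ n,
    {r : ℝ | ∃ z : Cyl, r = ((fhat^[n] z).2 - z.2) / n})

/-- A subset of the cylinder is bounded iff its second-coordinate projection is
a bounded subset of `ℝ`. -/
def VBounded (S : Set Cyl) : Prop := ∃ M : ℝ, ∀ z ∈ S, |z.2| ≤ M

/-- `B⁻ = {ẑ : f̂ⁿ(ẑ) ∈ H⁻ for all n ≥ 0}` where `H⁻ = (ℝ/ℤ)×(−∞,0]`. -/
def Bminus (fhat : Cyl → Cyl) : Set Cyl := {z | ∀ n : ℕ, (fhat^[n] z).2 ≤ 0}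

/-- `B⁺ = {ẑ : f̂ⁿ(ẑ) ∈ H⁺ for all n ≥ 0}` where `H⁺ = (ℝ/ℤ)×[0,∞)`. -/
def Bplus (fhat : Cyl → Cyl) : Set Cyl := {z | ∀ n : ℕ, 0 ≤ (fhat^[n] z).2}

/-- `B_S⁻`: the union of the unbounded connected components of `B⁻`. -/
def BS (fhat : Cyl → Cyl) : Set Cyl :=
  {z | z ∈ Bminus fhat ∧ ¬ VBounded (connectedComponentIn (Bminus fhat) z)}

/-- `B_N⁺`: the union of the unbounded connected components of `B⁺`. -/
def BN (fhat : Cyl → Cyl) : Set Cyl :=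
  {z | z ∈ Bplus fhat ∧ ¬ VBounded (connectedComponentIn (Bplus fhat) z)}

/-- The ω-limit set `ω(S) = ∩_{n≥0} closure(∪_{i≥n} f̂ⁱ(S))`. -/
def omegaSet (fhat : Cyl → Cyl) (S : Set Cyl) : Set Cyl :=
  ⋂ n : ℕ, closure (⋃ i : ℕ, ⋃ _ : n ≤ i, fhat^[i] '' S)

open Set Function Filter Topology Metric Bornology

theorem Set.MapsTo.iInter_image_iterate {α : Type*} {f : α → α} {s : Set α} (h : MapsTo f s s) :
    MapsTo f (⋂ n : ℕ, f^[n] '' s) (⋂ n : ℕ, f^[n] '' s) := by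
  intro z hz
  rw [mem_iInter] at hz ⊢
  rintro (_ | n)
  · simpa using h (by simpa using hz 0)
  · rw [iterate_succ', image_comp]
    exact mem_image_of_mem f (hz n)

theorem Homeomorph.closure_image_iterate {X : Type*} [TopologicalSpace X] (e : X ≃ₜ X) (n : ℕ)
    (s : Set X) : closure (e^[n] '' s) = e^[n] '' closure s := by
  have hclosed : IsClosedMap e^[n] := by
    induction n with
    | zero => exact IsClosedMap.id
    | succ n ih => exact ih.comp e.isClosedMap
  exact hclosed.closure_image_eq_of_continuous (e.continuous.iterate n) s

theorem Homeomorph.symm_apply_add_of_apply_add {G : Type*} [AddGroup G] [TopologicalSpace G]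
    (e : G ≃ₜ G) {v w : G} (h : ∀ p, e (p + v) = e p + w) (q : G) :
    e.symm (q + w) = e.symm q + v :=
  e.symm_apply_eq.2 (by rw [h, e.apply_symm_apply])

theorem IsPreconnected.inter_frontier_nonempty_of_isOpen {X : Type*} [TopologicalSpace X]
    {s u : Set X} (hs : IsPreconnected s) (hu : IsOpen u) (hsu : (s ∩ u).Nonempty)
    (hsu' : ¬s ⊆ u) : (s ∩ frontier u).Nonempty := by
  by_contra hfr
  refine hsu' (hs.subset_left_of_subset_union hu isClosed_closure.isOpen_compl
    (disjoint_compl_right_iff_subset.2 subset_closure) (fun x hx => ?_) hsu)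
  by_cases hxc : x ∈ closure u
  · refine Or.inl (by_contra fun hxu => hfr ⟨x, hx, ?_⟩)
    rw [hu.frontier_eq]
    exact ⟨hxc, hxu⟩
  · exact Or.inr hxc

theorem exists_isClopen_mem_disjoint_of_disjoint_connectedComponent {X : Type*}
    [TopologicalSpace X] [CompactSpace X] [T2Space X] {L : Set X} (hL : IsClosed L) {x : X}
    (h : Disjoint (connectedComponent x) L) : ∃ W, IsClopen W ∧ x ∈ W ∧ Disjoint W L := by
  rw [connectedComponent_eq_iInter_isClopen, disjoint_iff_inter_eq_empty, inter_comm] at h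
  obtain ⟨u, hu⟩ := hL.isCompact.elim_finite_subfamily_closed _ (fun s => s.2.1.isClosed) h
  refine ⟨⋂ i ∈ u, i, isClopen_biInter_finset fun i _ => i.2.1, mem_iInter₂.2 fun i _ => i.2.2, ?_⟩
  rw [disjoint_iff_inter_eq_empty, inter_comm, hu]

section ProperSpace

variable {X : Type*} [MetricSpace X] [ProperSpace X]

theorem exists_isCompact_eq_inter_isOpen_of_isBounded_connectedComponentIn {B : Set X}
    (hB : IsClosed B) {z : X} (hz : z ∈ B) (hQ : IsBounded (connectedComponentIn B z)) :
    ∃ V U, IsCompact V ∧ IsOpen U ∧ V = B ∩ U ∧ z ∈ V := by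
  obtain ⟨r, hr⟩ := hQ.subset_ball z
  set K := B ∩ closedBall z r
  have hzK : z ∈ K :=
    ⟨hz, mem_closedBall_self (nonempty_ball.1 ⟨z, hr (mem_connectedComponentIn hz)⟩).le⟩
  have : CompactSpace K := isCompact_iff_compactSpace.1 ((isCompact_closedBall z r).inter_left hB)
  have hdisj : Disjoint (connectedComponent (⟨z, hzK⟩ : K)) {x : K | r ≤ dist (x : X) z} := by
    refine disjoint_left.2 fun x hx hxr => (not_lt.2 hxr) (mem_ball.1 (hr ?_))
    refine connectedComponentIn_mono z (inter_subset_left : K ⊆ B) ?_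
    rw [connectedComponentIn_eq_image hzK]
    exact mem_image_of_mem _ hx
  obtain ⟨W, hW, hzW, hWr⟩ := exists_isClopen_mem_disjoint_of_disjoint_connectedComponent
    (isClosed_le continuous_const (continuous_subtype_val.dist continuous_const)) hdisj
  obtain ⟨U, hU, hUW⟩ := isOpen_induced_iff.1 hW.isOpen
  have hWball : ∀ x ∈ W, dist (x : X) z < r := fun x hx => not_le.1 fun h => hWr.ne_of_mem hx h rfl
  refine ⟨(↑) '' W, U ∩ ball z r, hW.isClosed.isCompact.image continuous_subtype_val,
    hU.inter isOpen_ball, ?_, ⟨_, hzW, rfl⟩⟩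
  ext v
  constructor
  · rintro ⟨x, hx, rfl⟩
    exact ⟨x.2.1, (hUW ▸ hx : x ∈ (↑) ⁻¹' U), hWball x hx⟩
  · rintro ⟨hvB, hvU, hvr⟩
    exact ⟨⟨v, hvB, mem_closedBall.2 (mem_ball.1 hvr).le⟩, hUW ▸ hvU, rfl⟩

theorem exists_isOpen_disjoint_frontier_of_isBounded_connectedComponentIn {B : Set X}
    (hB : IsClosed B) {z : X} (hz : z ∈ B) (hQ : IsBounded (connectedComponentIn B z)) :
    ∃ O, IsOpen O ∧ z ∈ O ∧ IsCompact (closure O) ∧ Disjoint (frontier O) B := by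
  obtain ⟨V, U, hV, hU, rfl, hzV⟩ :=
    exists_isCompact_eq_inter_isOpen_of_isBounded_connectedComponentIn hB hz hQ
  have hrest : IsClosed (B \ (B ∩ U)) := by
    rw [sdiff_self_inter]
    exact hB.sdiff hU
  obtain ⟨O, hO, hVO, hOrest, hOc⟩ := exists_open_between_and_isCompact_closure hV
    hrest.isOpen_compl fun x hx hx' => hx'.2 hx
  refine ⟨O, hO, hVO hzV, hOc, disjoint_left.2 fun x hxfr hxB => ?_⟩
  have hxO : x ∈ O := hVO (by_contra fun hxV => hOrest (frontier_subset_closure hxfr) ⟨hxB, hxV⟩)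
  exact (hO.frontier_eq ▸ hxfr).2 hxO

/-- If the component were bounded, an open set around it with compact closure and frontier
missing `⋂ B n` would have its frontier met by every such `C`, hence (Cantor) by `⋂ B n`. -/
theorem not_isBounded_connectedComponentIn_iInter {B : ℕ → Set X} (hB : ∀ n, IsClosed (B n))
    (hanti : Antitone B) {z : X} (hz : z ∈ ⋂ n, B n)
    (hC : ∀ n, ∀ U ∈ 𝓝 z, ∃ C ⊆ B n, IsPreconnected C ∧ ¬IsBounded C ∧ (C ∩ U).Nonempty) :
    ¬IsBounded (connectedComponentIn (⋂ n, B n) z) := by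
  intro hQ
  obtain ⟨O, hO, hzO, hOc, hfr⟩ :=
    exists_isOpen_disjoint_frontier_of_isBounded_connectedComponentIn (isClosed_iInter hB) hz hQ
  have hmeet : ∀ n, (B n ∩ frontier O).Nonempty := by
    intro n
    obtain ⟨C, hCB, hCc, hCu, hCO⟩ := hC n O (hO.mem_nhds hzO)
    have hCO' : ¬C ⊆ O := fun h => hCu (hOc.isBounded.subset (h.trans subset_closure))
    obtain ⟨x, hxC, hxfr⟩ := hCc.inter_frontier_nonempty_of_isOpen hO hCO hCO'
    exact ⟨x, hCB hxC, hxfr⟩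
  obtain ⟨x, hx⟩ := IsCompact.nonempty_iInter_of_sequence_nonempty_isCompact_isClosed _
    (fun n => inter_subset_inter_left _ (hanti n.le_succ)) hmeet
    (hOc.of_isClosed_subset ((hB 0).inter isClosed_frontier)
      (inter_subset_right.trans frontier_subset_closure))
    (fun n => (hB n).inter isClosed_frontier)
  rw [mem_iInter] at hx
  exact hfr.ne_of_mem (hx 0).2 (mem_iInter.2 fun n => (hx n).1) rfl

end ProperSpace

def BoundedDisplacement {X : Type*} [PseudoMetricSpace X] (f : X → X) : Prop :=
  ∃ M, ∀ x, dist (f x) x ≤ M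

namespace BoundedDisplacement

variable {X : Type*} [PseudoMetricSpace X] {f : X → X}

theorem iterate (hf : BoundedDisplacement f) (n : ℕ) : BoundedDisplacement f^[n] := by
  obtain ⟨M, hM⟩ := hf
  refine ⟨n * M, fun x => ?_⟩
  induction n with
  | zero => simp
  | succ n ih =>
    rw [iterate_succ_apply']
    calc dist (f (f^[n] x)) x ≤ dist (f (f^[n] x)) (f^[n] x) + dist (f^[n] x) x := dist_triangle ..
      _ ≤ M + n * M := add_le_add (hM _) ih
      _ = (n + 1 : ℕ) * M := by push_cast; ring

theorem isBounded_of_isBounded_image (hf : BoundedDisplacement f) {s : Set X}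
    (h : IsBounded (f '' s)) : IsBounded s := by
  obtain ⟨M, hM⟩ := hf
  obtain ⟨C, hC⟩ := isBounded_iff.1 h
  refine isBounded_iff.2 ⟨M + C + M, fun x hx y hy => ?_⟩
  calc dist x y ≤ dist x (f x) + dist (f x) (f y) + dist (f y) y := dist_triangle4 ..
    _ ≤ M + C + M := by
      gcongr
      exacts [dist_comm x (f x) ▸ hM x, hC (mem_image_of_mem f hx) (mem_image_of_mem f hy), hM y]

end BoundedDisplacement

theorem vBounded_iff_isBounded {S : Set Cyl} : VBounded S ↔ IsBounded S := by
  constructor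
  · rintro ⟨M, hM⟩
    exact (isCompact_univ.prod (isCompact_Icc (a := -M) (b := M))).isBounded.subset
      fun z hz => show z ∈ univ ×ˢ Icc (-M) M from ⟨trivial, abs_le.1 (hM z hz)⟩
  · intro h
    obtain ⟨M, hM⟩ := isBounded_iff_forall_norm_le.1 h.image_snd
    exact ⟨M, fun z hz => hM _ (mem_image_of_mem _ hz)⟩

theorem mem_BS_iff {g : Cyl → Cyl} {z : Cyl} :
    z ∈ BS g ↔ z ∈ Bminus g ∧ ¬IsBounded (connectedComponentIn (Bminus g) z) := by
  rw [BS, mem_ofPred_eq, vBounded_iff_isBounded]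

theorem mapsTo_Bminus (g : Cyl → Cyl) : MapsTo g (Bminus g) (Bminus g) :=
  fun _ hz n => iterate_succ_apply g n _ ▸ hz (n + 1)

theorem isClosed_Bminus {g : Cyl → Cyl} (hg : Continuous g) : IsClosed (Bminus g) := by
  simp only [Bminus, ofPred_forall]
  exact isClosed_iInter fun n => isClosed_le (continuous_snd.comp (hg.iterate n)) continuous_const

theorem mapsTo_BS {g : Cyl → Cyl} (hg : Continuous g) (hbd : BoundedDisplacement g) :
    MapsTo g (BS g) (BS g) := by
  intro z hz
  rw [mem_BS_iff] at hz ⊢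
  refine ⟨mapsTo_Bminus g hz.1, fun hb => hz.2 (hbd.isBounded_of_isBounded_image (hb.subset ?_))⟩
  exact (isPreconnected_connectedComponentIn.image g hg.continuousOn).subset_connectedComponentIn
    ⟨z, mem_connectedComponentIn hz.1, rfl⟩
    ((mapsTo_Bminus g).mono_left (connectedComponentIn_subset _ _)).image_subset

def BminusUpTo (g : Cyl → Cyl) (n : ℕ) : Set Cyl := {z | ∀ m ≤ n, (g^[m] z).2 ≤ 0}

theorem isClosed_BminusUpTo {g : Cyl → Cyl} (hg : Continuous g) (n : ℕ) :
    IsClosed (BminusUpTo g n) := by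
  simp only [BminusUpTo, ofPred_forall]
  exact isClosed_biInter fun m _ =>
    isClosed_le (continuous_snd.comp (hg.iterate m)) continuous_const

theorem antitone_BminusUpTo (g : Cyl → Cyl) : Antitone (BminusUpTo g) :=
  fun _ _ hmn _ hz m hm => hz m (hm.trans hmn)

theorem iInter_BminusUpTo (g : Cyl → Cyl) : ⋂ n, BminusUpTo g n = Bminus g := by
  ext z
  simp only [mem_iInter, BminusUpTo, Bminus, mem_ofPred_eq]
  exact ⟨fun h m => h m m le_rfl, fun h _ m _ => h m⟩

theorem iterate_mem_BminusUpTo_symm (e : Cyl ≃ₜ Cyl) {z : Cyl} (hz : z ∈ Bminus e) (n : ℕ) :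
    e^[n] z ∈ BminusUpTo e.symm n := by
  intro m hm
  rw [← Nat.add_sub_cancel' hm, iterate_add_apply,
    LeftInverse.iterate e.symm_apply_apply m]
  exact hz (n - m)

theorem omegaSet_eq_iInter_image_closure (e : Cyl ≃ₜ Cyl) {S : Set Cyl} (hS : MapsTo e S S) :
    omegaSet e S = ⋂ n, e^[n] '' closure S := by
  refine iInter_congr fun n => ?_
  rw [← e.closure_image_iterate]
  refine congrArg closure ((iUnion₂_subset fun i hi => ?_).antisymm
    (subset_iUnion₂_of_subset n le_rfl subset_rfl))
  rw [← Nat.add_sub_cancel' hi, iterate_add, image_comp]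
  exact image_mono (hS.iterate _).image_subset

theorem iInter_image_closure_BS_subset_BS_symm (e : Cyl ≃ₜ Cyl) (he : BoundedDisplacement e) :
    ⋂ n, e^[n] '' closure (BS e) ⊆ BS e.symm := by
  intro z hz
  rw [mem_iInter] at hz
  have hclBS : closure (BS e) ⊆ Bminus e :=
    closure_minimal (fun _ h => h.1) (isClosed_Bminus e.continuous)
  have hzB : z ∈ ⋂ n, BminusUpTo e.symm n := mem_iInter.2 fun n => by
    obtain ⟨u, hu, rfl⟩ := hz n
    exact iterate_mem_BminusUpTo_symm e (hclBS hu) n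
  rw [mem_BS_iff, ← iInter_BminusUpTo]
  refine ⟨hzB, not_isBounded_connectedComponentIn_iInter (isClosed_BminusUpTo e.symm.continuous)
    (antitone_BminusUpTo _) hzB fun n U hU => ?_⟩
  have hzn : z ∈ closure (e^[n] '' BS e) := by
    rw [e.closure_image_iterate]
    exact hz n
  obtain ⟨_, hpU, u, hu, rfl⟩ := mem_closure_iff_nhds.1 hzn U hU
  rw [mem_BS_iff] at hu
  refine ⟨e^[n] '' connectedComponentIn (Bminus e) u, ?_,
    isPreconnected_connectedComponentIn.image _ (e.continuous.iterate n).continuousOn,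
    fun hb => hu.2 ((he.iterate n).isBounded_of_isBounded_image hb),
    ⟨_, ⟨u, mem_connectedComponentIn hu.1, rfl⟩, hpU⟩⟩
  rintro _ ⟨v, hv, rfl⟩
  exact iterate_mem_BminusUpTo_symm e (connectedComponentIn_subset _ _ hv) n

theorem omegaSet_BS_subset (e : Cyl ≃ₜ Cyl) (he : BoundedDisplacement e) :
    omegaSet e (BS e) ⊆ omegaSet e.symm (BS e.symm) := by
  have hinv := ((mapsTo_BS e.continuous he).closure e.continuous).iInter_image_iterate
  rw [omegaSet_eq_iInter_image_closure e (mapsTo_BS e.continuous he)]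
  intro z hz
  refine mem_iInter.2 fun n => subset_closure (mem_iUnion₂.2 ⟨n, le_rfl, e^[n] z,
    iInter_image_closure_BS_subset_BS_symm e he (hinv.iterate n hz), ?_⟩)
  exact LeftInverse.iterate e.symm_apply_apply n z

theorem exists_abs_le_of_periodic {φ : ℝ × ℝ → ℝ} (hφ : Continuous φ)
    (h₁ : ∀ x y, φ (x + 1, y) = φ (x, y)) (h₂ : ∀ x y, φ (x, y + 1) = φ (x, y)) :
    ∃ M, ∀ z, |φ z| ≤ M := by
  obtain ⟨M, hM⟩ := (isCompact_Icc.prod isCompact_Icc).exists_bound_of_continuousOn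
    (s := Icc (0 : ℝ) 1 ×ˢ Icc (0 : ℝ) 1) hφ.continuousOn
  refine ⟨M, fun ⟨x, y⟩ => ?_⟩
  have hx := (show Periodic (fun t => φ (t, y)) 1 from fun t => h₁ t y).sub_int_mul_eq (x := x) ⌊x⌋
  have hy := (show Periodic (fun t => φ (Int.fract x, t)) 1 from fun t => h₂ _ t).sub_int_mul_eq
    (x := y) ⌊y⌋
  simp only [mul_one, Int.self_sub_floor] at hx hy
  rw [← hx, ← hy, ← Real.norm_eq_abs]
  exact hM _ ⟨⟨Int.fract_nonneg x, (Int.fract_lt_one x).le⟩,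
    ⟨Int.fract_nonneg y, (Int.fract_lt_one y).le⟩⟩

theorem exists_abs_sub_snd_le_of_periodic {G : ℝ × ℝ → ℝ × ℝ} (hG : Continuous G) (c : ℤ)
    (h₁ : ∀ x y, (G (x + 1, y)).2 = (G (x, y)).2)
    (h₂ : ∀ x y, (G (x + c, y + 1)).2 = (G (x, y)).2 + 1) :
    ∃ M, ∀ z, |(G z).2 - z.2| ≤ M := by
  refine exists_abs_le_of_periodic (by fun_prop) (fun x y => by rw [h₁]) fun x y => ?_
  have hshift := (show Periodic (fun t => (G (t, y)).2) 1 from fun t => h₁ t y).sub_int_mul_eq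
    (x := x) c
  have hc := h₂ (x - c) y
  rw [sub_add_cancel] at hc
  simp only [mul_one] at hshift
  dsimp only
  linarith

namespace DehnLift

variable (L : DehnLift)

theorem apply_add_one_zero (p : ℝ × ℝ) : L.F (p + (1, 0)) = L.F p + (1, 0) := by
  obtain ⟨x, y⟩ := p
  simpa using L.horiz x y

theorem apply_add_zero_one (p : ℝ × ℝ) : L.F (p + (0, 1)) = L.F p + ((L.k : ℝ), 1) := by
  obtain ⟨x, y⟩ := p
  simpa using L.vert x y

theorem exists_abs_sub_snd_le : ∃ M, ∀ z, |(L.F z).2 - z.2| ≤ M :=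
  exists_abs_sub_snd_le_of_periodic L.F.continuous 0 (fun x y => by simp [L.horiz])
    fun x y => by simp [L.vert]

theorem exists_abs_symm_sub_snd_le : ∃ M, ∀ z, |(L.F.symm z).2 - z.2| ≤ M := by
  refine exists_abs_sub_snd_le_of_periodic L.F.symm.continuous L.k (fun x y => ?_) fun x y => ?_
  · have := L.F.symm_apply_add_of_apply_add L.apply_add_one_zero (x, y)
    simp_all
  · have := L.F.symm_apply_add_of_apply_add L.apply_add_zero_one (x, y)
    simp_all

end DehnLift

theorem surjective_projCyl : Surjective projCyl := fun ⟨a, y⟩ => by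
  obtain ⟨x, rfl⟩ := QuotientAddGroup.mk_surjective a
  exact ⟨(x, y), rfl⟩

theorem isQuotientMap_projCyl : IsQuotientMap projCyl :=
  (QuotientAddGroup.isOpenMap_coe.prodMap IsOpenMap.id).isQuotientMap
    ((continuous_quotient_mk'.comp continuous_fst).prodMk continuous_snd) surjective_projCyl

section Lift

variable {G G' : ℝ × ℝ → ℝ × ℝ} {g g' : Cyl → Cyl}

theorem continuous_of_lift (hG : Continuous G) (hg : ∀ z, projCyl (G z) = g (projCyl z)) :
    Continuous g := by
  rw [isQuotientMap_projCyl.continuous_iff, show g ∘ projCyl = projCyl ∘ G from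
    funext fun z => (hg z).symm]
  exact isQuotientMap_projCyl.continuous.comp hG

theorem leftInverse_of_lift (h : LeftInverse G' G) (hg : ∀ z, projCyl (G z) = g (projCyl z))
    (hg' : ∀ z, projCyl (G' z) = g' (projCyl z)) : LeftInverse g' g := fun w => by
  obtain ⟨z, rfl⟩ := surjective_projCyl w
  rw [← hg, ← hg', h z]

theorem boundedDisplacement_of_lift (hG : ∃ M, ∀ z, |(G z).2 - z.2| ≤ M)
    (hg : ∀ z, projCyl (G z) = g (projCyl z)) : BoundedDisplacement g := by
  obtain ⟨M, hM⟩ := hG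
  refine ⟨max (1 / 2) M, fun w => ?_⟩
  obtain ⟨z, rfl⟩ := surjective_projCyl w
  rw [← hg, Prod.dist_eq]
  refine max_le_max ?_ (hM z)
  simpa [dist_eq_norm] using AddCircle.norm_le_half_period 1 one_ne_zero

end Lift

def cylHomeomorphOfLift (F : (ℝ × ℝ) ≃ₜ (ℝ × ℝ)) {g g' : Cyl → Cyl}
    (hg : ∀ z, projCyl (F z) = g (projCyl z)) (hg' : ∀ z, projCyl (F.symm z) = g' (projCyl z)) :
    Cyl ≃ₜ Cyl where
  toFun := g
  invFun := g'
  left_inv := leftInverse_of_lift F.symm_apply_apply hg hg'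
  right_inv := leftInverse_of_lift F.apply_symm_apply hg' hg
  continuous_toFun := continuous_of_lift F.continuous hg
  continuous_invFun := continuous_of_lift F.symm.continuous hg'

/-- The ω-limit of `B_S⁻` computed for `f̂` equals the ω-limit of
the corresponding set computed for the inverse map `f̂⁻¹`. -/
theorem omega_BS_eq_omega_BS_inverse
    (L : DehnLift) (fhat fhatinv : Cyl → Cyl)
    (hfhat : ∀ z : ℝ × ℝ, projCyl (L.F z) = fhat (projCyl z))
    (hfhatinv : ∀ z : ℝ × ℝ, projCyl (L.F.symm z) = fhatinv (projCyl z)) :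
    omegaSet fhat (BS fhat) = omegaSet fhatinv (BS fhatinv) := by
  let e := cylHomeomorphOfLift L.F hfhat hfhatinv
  have he : BoundedDisplacement e := boundedDisplacement_of_lift L.exists_abs_sub_snd_le hfhat
  have he' : BoundedDisplacement e.symm :=
    boundedDisplacement_of_lift L.exists_abs_symm_sub_snd_le hfhatinv
  exact (omegaSet_BS_subset e he).antisymm (omegaSet_BS_subset e.symm he')
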